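/- arXiv:2002.03257 — 2 statements merged into one kernel-verified Lean document; each statement's English description precedes it below -/
import Mathlib

section
/- Let p ≥ 1 be an integer, q = p² - p + 1, and let P ⊂ ℝ² be the pentagon with vertices (q,0), (-q,0), (q-1,1), (-(q-1),1), (0, q/p). Then ehr_P(t) ≡ -ehr_ℓ(t), where ℓ = [-1/p,0]; that is, ehr_P(k) + ehr_ℓ(k) is a polynomial function of k. -/
open Set Pointwise

noncomputable section

/-- Number of lattice points in the `k`-th dilate of `Q ⊆ ℝ^n`. -/
def ehr {n : ℕ} (Q : Set (Fin n → ℝ)) (k : ℕ) : ℕ :=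
  {x : Fin n → ℤ | (fun i => (x i : ℝ)) ∈ (k : ℝ) • Q}.ncard

/-- `Q` is a rational polytope: the convex hull of finitely many rational points. -/
def IsRatPolytope {n : ℕ} (Q : Set (Fin n → ℝ)) : Prop :=
  ∃ V : Finset (Fin n → ℚ), Q = convexHull ℝ ((fun (v : Fin n → ℚ) (i : Fin n) => ((v i : ℚ) : ℝ)) '' (V : Set (Fin n → ℚ)))

/-- `Q` is an integral polytope: the convex hull of finitely many integer points. -/
def IsIntPolytope {n : ℕ} (Q : Set (Fin n → ℝ)) : Prop :=
  ∃ V : Finset (Fin n → ℤ), Q = convexHull ℝ ((fun (v : Fin n → ℤ) (i : Fin n) => ((v i : ℤ) : ℝ)) '' (V : Set (Fin n → ℤ)))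

/-- `p` is a period of `c`. -/
def IsPeriodOf (c : ℤ → ℚ) (p : ℕ) : Prop := 0 < p ∧ ∀ k : ℤ, c (k + p) = c k

/-- `p` is the minimum period of `c`. -/
def IsMinPeriod (c : ℤ → ℚ) (p : ℕ) : Prop :=
  IsPeriodOf c p ∧ ∀ m : ℕ, IsPeriodOf c m → p ≤ m

/-- standard basis vector -/
def stdb {n : ℕ} (j : Fin n) : Fin n → ℝ := fun j' => if j' = j then 1 else 0

/-- The pyramid over a polytope. -/
def pyr {d : ℕ} (Q : Set (Fin d → ℝ)) : Set (Fin (d + 1) → ℝ) :=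
  convexHull ℝ ((fun x : Fin d → ℝ => Fin.snoc x (0 : ℝ)) '' Q ∪ {Fin.snoc (0 : Fin d → ℝ) 1})

/-- The `i`-fold pyramid. -/
def pyrIter {d : ℕ} : (i : ℕ) → Set (Fin d → ℝ) → Set (Fin (d + i) → ℝ)
  | 0, Q => Q
  | (i + 1), Q => pyr (pyrIter i Q)

/-- The segment `ℓ = [-1/p, 0] ⊆ ℝ^1`. -/
def seg (p : ℕ) : Set (Fin 1 → ℝ) := convexHull ℝ {(fun _ => -(1 / (p : ℝ))), 0}

/-- The pentagon with vertices `(±q,0)`, `(±(q-1),1)`, `(0,q/p)`, where `q = p² - p + 1`. -/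
def pent (p : ℕ) : Set (Fin 2 → ℝ) :=
  convexHull ℝ {![(p : ℝ)^2 - p + 1, 0], ![-((p : ℝ)^2 - p + 1), 0],
    ![(p : ℝ)^2 - p + 1 - 1, 1], ![-((p : ℝ)^2 - p + 1 - 1), 1],
    ![0, ((p : ℝ)^2 - p + 1) / p]}

/-- Cartesian product of subsets of `ℝ^a` and `ℝ^b`, inside `ℝ^(a+b)`. -/
def prodSet {a b : ℕ} (A : Set (Fin a → ℝ)) (B : Set (Fin b → ℝ)) : Set (Fin (a + b) → ℝ) :=
  {x | (fun j => x (Fin.castAdd b j)) ∈ A ∧ (fun j => x (Fin.natAdd a j)) ∈ B}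

/-- Transport a subset of `ℝ^m` to `ℝ^n` along a proof `m = n`. -/
def castSet {m n : ℕ} (h : m = n) (S : Set (Fin m → ℝ)) : Set (Fin n → ℝ) :=
  {x | (x ∘ Fin.cast h) ∈ S}

/-- Translate of a set. -/
def transl {n : ℕ} (v : Fin n → ℝ) (S : Set (Fin n → ℝ)) : Set (Fin n → ℝ) :=
  (fun x => x + v) '' S

/-- The cyclic polytope `C_i = conv{(t, t², …, t^i) : t ∈ T}`. -/
def cyc (T : Finset ℤ) (i : ℕ) : Set (Fin i → ℝ) :=
  convexHull ℝ ((fun t : ℤ => fun j : Fin i => (t : ℝ) ^ ((j : ℕ) + 1)) '' ↑T)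

/-- Euclidean volume. -/
def vol {i : ℕ} (S : Set (Fin i → ℝ)) : ℝ := (MeasureTheory.volume S).toReal

/-- `q : ℤ → ℚ` is a quasi-polynomial: `q k = ∑ cᵢ(k) kⁱ` with periodic coefficients. -/
def IsQuasiPoly (q : ℤ → ℚ) : Prop :=
  ∃ (n : ℕ) (c : ℕ → ℤ → ℚ), (∀ i, ∃ p, IsPeriodOf (c i) p) ∧
    ∀ k : ℤ, q k = ∑ i ∈ Finset.range (n + 1), c i k * (k : ℚ) ^ i

/-- `F` is a facet of `Q`: a face cut out by a supporting hyperplane, of codimension 1. -/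
def IsFacet {n : ℕ} (Q F : Set (Fin n → ℝ)) : Prop :=
  (∃ (l : (Fin n → ℝ) →ₗ[ℝ] ℝ) (c : ℝ), (∀ x ∈ Q, l x ≤ c) ∧ F = {x ∈ Q | l x = c}) ∧
  Module.finrank ℝ ↥(vectorSpan ℝ F) + 1 = Module.finrank ℝ ↥(vectorSpan ℝ Q)

/-- A rational polytopal ball: a finite union of full-dimensional rational polytopes,
pairwise meeting in common facets, which is homeomorphic to a closed ball. -/
def IsPolytopalBall {n : ℕ} (Q : Set (Fin n → ℝ)) : Prop :=
  ∃ s : Finset (Set (Fin n → ℝ)),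
    Q = (⋃ P ∈ s, P) ∧
    (∀ P ∈ s, IsRatPolytope P ∧ affineSpan ℝ P = ⊤) ∧
    (∀ P ∈ s, ∀ P' ∈ s, P ≠ P' → (P ∩ P').Nonempty →
      IsFacet P (P ∩ P') ∧ IsFacet P' (P ∩ P')) ∧
    Nonempty (Q ≃ₜ (Metric.closedBall (0 : EuclideanSpace ℝ (Fin n)) 1 : Set (EuclideanSpace ℝ (Fin n))))

/-!
In its `k`-th dilate the pentagon is cut out by `0 ≤ y`, `|x| + y ≤ kq` and
`(p - 1)|x| + p²y ≤ kpq`. Counting lattice points row by row, the rows `y ≤ k` (a trapezoid)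
contribute a polynomial in `k`. In a row `y = k + j` above it the half-width is
`pk(p - 1) - (p + 1)j - ⌈j / (p - 1)⌉`, and summing these ceilings up to the top row
`⌊kq / p⌋ = k(p - 1) + ⌊k / p⌋` leaves a single non-polynomial term:
`ehr_P(k) = pqk² + (q + 2)k + 1 - ⌊k / p⌋`. Since `ehr_ℓ(k) = ⌊k / p⌋ + 1`, the sum is a polynomial.
-/

theorem convex_setOf_mul_abs_add_mul_le (α β c : ℝ) (hα : 0 ≤ α) :
    Convex ℝ {v : Fin 2 → ℝ | α * |v 0| + β * v 1 ≤ c} := by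
  intro x (hx : α * |x 0| + β * x 1 ≤ c) y (hy : α * |y 0| + β * y 1 ≤ c) a b ha hb hab
  show α * |a * x 0 + b * y 0| + β * (a * x 1 + b * y 1) ≤ c
  have habs : |a * x 0 + b * y 0| ≤ a * |x 0| + b * |y 0| :=
    (abs_add_le _ _).trans_eq (by rw [abs_mul, abs_mul, abs_of_nonneg ha, abs_of_nonneg hb])
  linarith [mul_le_mul_of_nonneg_left habs hα, mul_le_mul_of_nonneg_left hx ha,
    mul_le_mul_of_nonneg_left hy hb, congrArg (· * c) hab]

theorem Convex.vec2_mem_of_abs_le {S : Set (Fin 2 → ℝ)} (hS : Convex ℝ S) {a x y : ℝ}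
    (hl : ![-a, y] ∈ S) (hr : ![a, y] ∈ S) (hx : |x| ≤ a) : ![x, y] ∈ S := by
  have ht : |x / a| ≤ 1 := by
    rw [abs_div]; exact div_le_one_of_le₀ (hx.trans (le_abs_self a)) (abs_nonneg a)
  have hxa : x / a * a = x := div_mul_cancel_of_imp fun ha => abs_nonpos_iff.1 (ha ▸ hx)
  convert hS hl hr (a := (1 - x / a) / 2) (b := (1 + x / a) / 2)
    (by linarith [(abs_le.1 ht).2]) (by linarith [(abs_le.1 ht).1]) (by ring) using 1
  rw [Matrix.smul_vec2, Matrix.smul_vec2, Matrix.vec2_add]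
  exact Matrix.vec2_eq (by simp only [smul_eq_mul]; linear_combination -hxa)
    (by simp only [smul_eq_mul]; ring)

theorem Convex.vec2_mem_of_trapezoid {S : Set (Fin 2 → ℝ)} (hS : Convex ℝ S) {a b y₀ y₁ : ℝ}
    (ha : 0 ≤ a) (hb : 0 ≤ b) (hy : y₀ < y₁)
    (h₀l : ![-a, y₀] ∈ S) (h₀r : ![a, y₀] ∈ S) (h₁l : ![-b, y₁] ∈ S) (h₁r : ![b, y₁] ∈ S)
    {v : Fin 2 → ℝ} (hv₁ : v 1 ∈ Set.Icc y₀ y₁)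
    (hv₀ : |v 0| * (y₁ - y₀) ≤ (y₁ - v 1) * a + (v 1 - y₀) * b) : v ∈ S := by
  set s := (v 1 - y₀) / (y₁ - y₀)
  have hs : s * (y₁ - y₀) = v 1 - y₀ := div_mul_cancel₀ _ (sub_pos.2 hy).ne'
  have hs0 : 0 ≤ s := div_nonneg (by linarith [hv₁.1]) (by linarith)
  have hs1 : s ≤ 1 := div_le_one_of_le₀ (by linarith [hv₁.2]) (by linarith)
  set c := (1 - s) * a + s * b
  have hc : |v 0| ≤ c :=
    le_of_mul_le_mul_right (by linear_combination hv₀ + (a - b) * hs) (sub_pos.2 hy)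
  set t := v 0 / c
  have ht : |t| ≤ 1 := by
    rw [abs_div]; exact div_le_one_of_le₀ (hc.trans (le_abs_self c)) (abs_nonneg c)
  have htc : t * c = v 0 := div_mul_cancel_of_imp fun hc0 => abs_nonpos_iff.1 (hc0 ▸ hc)
  have hA := hS.vec2_mem_of_abs_le h₀l h₀r (x := t * a)
    (by rw [abs_mul, abs_of_nonneg ha]; exact mul_le_of_le_one_left ha ht)
  have hB := hS.vec2_mem_of_abs_le h₁l h₁r (x := t * b)
    (by rw [abs_mul, abs_of_nonneg hb]; exact mul_le_of_le_one_left hb ht)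
  convert hS hA hB (sub_nonneg.2 hs1) hs0 (sub_add_cancel 1 s) using 1
  ext i
  fin_cases i
  · simp only [Fin.zero_eta, Fin.isValue, Pi.add_apply, Pi.smul_apply, Matrix.cons_val_zero,
      smul_eq_mul]
    linear_combination -htc
  · simp only [Fin.mk_one, Fin.isValue, Pi.add_apply, Pi.smul_apply, Matrix.cons_val_one,
      Matrix.cons_val_zero, smul_eq_mul]
    linear_combination -hs

theorem pent_eq (p : ℕ) (hp : 1 ≤ p) :
    pent p = {v | 0 ≤ v 1 ∧ |v 0| + v 1 ≤ (p : ℝ) ^ 2 - p + 1 ∧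
      (p - 1) * |v 0| + p ^ 2 * v 1 ≤ p * ((p : ℝ) ^ 2 - p + 1)} := by
  unfold pent
  set q : ℝ := (p : ℝ) ^ 2 - p + 1
  have hp1 : (1 : ℝ) ≤ p := by exact_mod_cast hp
  have hq1 : 1 ≤ q := by nlinarith
  have hqp : q / p * p = q := div_mul_cancel₀ q (by positivity)
  refine Set.Subset.antisymm (convexHull_min ?_ ?_) ?_
  · have hq0 : 0 ≤ q - 1 := by linarith
    have hqp0 : 0 ≤ q / p := by positivity
    rintro v (rfl | rfl | rfl | rfl | rfl) <;>
      simp only [Set.mem_ofPred_eq, Matrix.cons_val_zero, Matrix.cons_val_one, abs_neg,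
        abs_zero, abs_of_nonneg hq0, abs_of_nonneg (zero_le_one.trans hq1)]
      <;> refine ⟨by linarith, by nlinarith, by nlinarith⟩
  · have h₁ := convex_setOf_mul_abs_add_mul_le 1 1 q zero_le_one
    simp only [one_mul] at h₁
    exact (convex_halfSpace_ge (LinearMap.proj 1 : (Fin 2 → ℝ) →ₗ[ℝ] ℝ).isLinear 0).inter
      (h₁.inter (convex_setOf_mul_abs_add_mul_le _ _ _ (sub_nonneg.2 hp1)))
  · rintro v ⟨h0, h1, h2⟩
    set V : Set (Fin 2 → ℝ) := {![q, 0], ![-q, 0], ![q - 1, 1], ![-(q - 1), 1], ![0, q / p]}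
    have hS := convex_convexHull ℝ V
    have hV : ∀ w ∈ V, w ∈ convexHull ℝ V := fun w hw => subset_convexHull ℝ V hw
    rcases le_or_gt (v 1) 1 with hv1 | hv1
    · exact hS.vec2_mem_of_trapezoid (a := q) (b := q - 1) (by linarith) (by linarith)
        zero_lt_one (hV _ (by simp [V])) (hV _ (by simp [V])) (hV _ (by simp [V]))
        (hV _ (by simp [V])) ⟨h0, hv1⟩ (by linarith)
    · have hpq : (p : ℝ) < q := by nlinarith [abs_nonneg (v 0)]
      have hapex : ![-0, q / p] ∈ convexHull ℝ V := by rw [neg_zero]; exact hV _ (by simp [V])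
      refine hS.vec2_mem_of_trapezoid (a := q - 1) (b := 0) (by linarith) le_rfl
        ((one_lt_div (by positivity)).2 hpq)
        (hV _ (by simp [V])) (hV _ (by simp [V])) hapex (hV _ (by simp [V]))
        ⟨hv1.le, (le_div_iff₀ (by positivity)).2 (by nlinarith [abs_nonneg (v 0)])⟩ ?_
      rw [← mul_le_mul_iff_of_pos_left (by positivity : (0 : ℝ) < p)]
      nlinarith [mul_le_mul_of_nonneg_left h2 (sub_nonneg.2 hp1)]

theorem mem_smul_pent {p k : ℕ} (hp : 1 ≤ p) (hk : 0 < k) {v : Fin 2 → ℝ} :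
    v ∈ (k : ℝ) • pent p ↔ 0 ≤ v 1 ∧ |v 0| + v 1 ≤ k * ((p : ℝ) ^ 2 - p + 1) ∧
      (p - 1) * |v 0| + p ^ 2 * v 1 ≤ k * (p * ((p : ℝ) ^ 2 - p + 1)) := by
  have hk0 : (0 : ℝ) < k := by exact_mod_cast hk
  rw [mem_smul_set_iff_inv_smul_mem₀ hk0.ne', pent_eq p hp]
  simp only [Set.mem_ofPred_eq, Pi.smul_apply, smul_eq_mul, abs_mul,
    abs_of_pos (inv_pos.2 hk0)]
  rw [mul_nonneg_iff_of_pos_left (inv_pos.2 hk0), ← mul_add, inv_mul_le_iff₀ hk0,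
    mul_left_comm _ (k : ℝ)⁻¹, mul_left_comm _ (k : ℝ)⁻¹, ← mul_add, inv_mul_le_iff₀ hk0]

/-- Half-width of row `y = n` of `k • pent p`: up to `y = k` the side `|x| + y ≤ kq` binds,
above it the side `(p - 1)|x| + p²y ≤ kpq` (rounded down by `ℤ` division). -/
def pentHalfWidth (p k n : ℕ) : ℤ :=
  if n ≤ k then k * ((p : ℤ) ^ 2 - p + 1) - n
  else (p * k * ((p : ℤ) ^ 2 - p + 1) - p ^ 2 * n) / (p - 1)

theorem le_mul_sub_one_add_div_iff {p k n : ℕ} (hp : 1 ≤ p) :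
    n ≤ k * (p - 1) + k / p ↔ (p : ℤ) * n ≤ k * ((p : ℤ) ^ 2 - p + 1) := by
  rw [show k * (p - 1) + k / p = (k + k * (p - 1) * p) / p by
    rw [Nat.add_mul_div_right _ _ hp, add_comm], Nat.le_div_iff_mul_le hp]
  zify [hp]
  constructor <;> intro h <;> linarith

theorem abs_le_pentHalfWidth_iff {p k n : ℕ} (hp : 1 ≤ p) {x : ℤ} :
    |x| + n ≤ k * ((p : ℤ) ^ 2 - p + 1) ∧
        (p - 1) * |x| + p ^ 2 * n ≤ k * (p * ((p : ℤ) ^ 2 - p + 1)) ↔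
      n ≤ k * (p - 1) + k / p ∧ |x| ≤ pentHalfWidth p k n := by
  rw [le_mul_sub_one_add_div_iff hp, pentHalfWidth]
  have hp1 : (1 : ℤ) ≤ p := by exact_mod_cast hp
  have hq : (0 : ℤ) ≤ (p : ℤ) ^ 2 - p + 1 := by nlinarith
  have hx := abs_nonneg x
  split_ifs with hnk
  · have hnk' : (n : ℤ) ≤ k := by exact_mod_cast hnk
    constructor
    · rintro ⟨h1, h2⟩
      exact ⟨by nlinarith, by linarith⟩
    · rintro ⟨h1, h2⟩
      have h3 := mul_le_mul_of_nonneg_left h2 (sub_nonneg.2 hp1)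
      exact ⟨by linarith, by nlinarith [mul_nonneg (sub_nonneg.2 hnk') hq]⟩
  · have hkn : (k : ℤ) < n := by exact_mod_cast not_le.1 hnk
    have hp2 : (p : ℤ) * n ≤ k * ((p : ℤ) ^ 2 - p + 1) → 0 < (p : ℤ) - 1 := fun hpn => by
      by_contra! h
      have hp1' : (p : ℤ) = 1 := by omega
      rw [hp1'] at hpn
      linarith
    constructor
    · rintro ⟨h1, h2⟩
      have hpn : (p : ℤ) * n ≤ k * ((p : ℤ) ^ 2 - p + 1) := by nlinarith
      exact ⟨hpn, (Int.le_ediv_iff_mul_le (hp2 hpn)).2 (by linarith)⟩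
    · rintro ⟨hpn, h⟩
      have h2 := (Int.le_ediv_iff_mul_le (hp2 hpn)).1 h
      have h1 : ((p : ℤ) - 1) * (|x| + n) ≤ ((p : ℤ) - 1) * (k * ((p : ℤ) ^ 2 - p + 1)) := by
        nlinarith [mul_nonneg (sub_nonneg.2 hkn.le) hq]
      exact ⟨le_of_mul_le_mul_left h1 (hp2 hpn), by linarith⟩

theorem ncard_symmetric_rows (Y : ℕ) (w : ℕ → ℤ) (hw : ∀ n ≤ Y, 0 ≤ w n) :
    ({z : Fin 2 → ℤ | ∃ n ≤ Y, z 1 = n ∧ |z 0| ≤ w n}.ncard : ℤ) =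
      ∑ n ∈ Finset.range (Y + 1), (2 * w n + 1) := by
  have hinj : Function.Injective fun s : (_ : ℕ) × ℤ => ![s.2, (s.1 : ℤ)] := by
    rintro ⟨n, x⟩ ⟨n', x'⟩ h
    have h0 : x = x' := congrFun h 0
    have h1 : (n : ℤ) = n' := congrFun h 1
    rw [h0, Nat.cast_inj.1 h1]
  have hset : {z : Fin 2 → ℤ | ∃ n ≤ Y, z 1 = n ∧ |z 0| ≤ w n} =
      (fun s : (_ : ℕ) × ℤ => ![s.2, (s.1 : ℤ)]) ''
        ((Finset.range (Y + 1)).sigma fun n => Finset.Icc (-w n) (w n)) := by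
    ext z
    simp only [Set.mem_ofPred_eq, Finset.coe_sigma, Set.mem_image, Set.mem_sigma_iff,
      Finset.coe_range, Set.mem_Iio, Finset.coe_Icc, Set.mem_Icc, Nat.lt_succ_iff, abs_le]
    constructor
    · rintro ⟨n, hn, hz, hx⟩
      exact ⟨⟨n, z 0⟩, ⟨hn, hx⟩, by ext i; fin_cases i <;> simp [hz]⟩
    · rintro ⟨⟨n, x⟩, ⟨hn, hx⟩, rfl⟩
      exact ⟨n, hn, rfl, hx⟩
  rw [hset, Set.ncard_image_of_injective _ hinj, Set.ncard_coe_finset, Finset.card_sigma,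
    Nat.cast_sum]
  refine Finset.sum_congr rfl fun n hn => ?_
  rw [Int.card_Icc, Int.toNat_of_nonneg (by linarith [hw n (Nat.lt_succ_iff.1
    (Finset.mem_range.1 hn))])]
  ring

theorem two_mul_sum_range_linear (a b : ℤ) (N : ℕ) :
    2 * ∑ n ∈ Finset.range N, (a + b * n) = 2 * N * a + b * N * (N - 1) := by
  induction N with
  | zero => simp
  | succ N ih =>
    rw [Finset.sum_range_succ, mul_add, ih]
    push_cast
    ring

/-- The remainder `b` may equal `d`, so that the top rows of the pentagon can be summed without
a case split on `k % p`. -/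
theorem two_mul_sum_range_ediv {d a b : ℤ} (J : ℕ) (hJ : (J : ℤ) = d * a + b) (hb : 0 ≤ b)
    (hbd : b ≤ d) : 2 * ∑ j ∈ Finset.range J, (j : ℤ) / d = d * a * (a - 1) + 2 * a * b := by
  induction J generalizing a b with
  | zero =>
    simp only [Finset.range_zero, Finset.sum_empty, mul_zero, Nat.cast_zero] at hJ ⊢
    have hda : d * (a * (a + 1)) = 0 := by
      rcases (hb.trans hbd).eq_or_lt with rfl | hd
      · exact zero_mul _
      · obtain rfl | rfl : a = -1 ∨ a = 0 := by
          have : -1 ≤ a := by nlinarith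
          have : a ≤ 0 := by nlinarith
          omega
        all_goals ring
    linear_combination 2 * a * hJ + hda
  | succ J ih =>
    push_cast at hJ
    rcases hb.eq_or_lt with rfl | hb1
    · have hd : 0 < d := by
        rcases hbd.eq_or_lt with rfl | hd
        · linarith
        · exact hd
      have hJd : (J : ℤ) / d = a - 1 := (Int.ediv_eq_iff_of_pos hd).2 ⟨by linarith, by linarith⟩
      rw [Finset.sum_range_succ, mul_add, ih (a := a - 1) (b := d - 1) (by linarith)
        (by linarith) (by linarith), hJd]
      ring
    · have hd : 0 < d := by linarith
      have hJd : (J : ℤ) / d = a := (Int.ediv_eq_iff_of_pos hd).2 ⟨by linarith, by linarith⟩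
      rw [Finset.sum_range_succ, mul_add, ih (a := a) (b := b - 1) (by linarith)
        (by linarith) (by linarith), hJd]
      ring

theorem pentHalfWidth_of_le {p k n : ℕ} (h : n ≤ k) :
    pentHalfWidth p k n = k * ((p : ℤ) ^ 2 - p + 1) - n :=
  if_pos h

theorem pentHalfWidth_add {p k : ℕ} (hp : 2 ≤ p) (j : ℕ) :
    pentHalfWidth p k (k + 1 + j) =
      p * k * (p - 1) - (p + 1) * (j + 1) - 1 - j / ((p : ℤ) - 1) := by
  have hd : (0 : ℤ) < p - 1 := by
    have : (2 : ℤ) ≤ p := by exact_mod_cast hp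
    linarith
  have hnum : (p : ℤ) * k * (p ^ 2 - p + 1) - p ^ 2 * ((k + 1 + j : ℕ) : ℤ) =
      Int.negSucc j + (p * k * (p - 1) - (p + 1) * (j + 1)) * (p - 1) := by
    rw [Int.negSucc_eq]; push_cast; ring
  rw [pentHalfWidth, if_neg (by omega), hnum, Int.add_mul_ediv_right _ _ hd.ne',
    Int.negSucc_ediv _ hd, ← Int.div_def]
  ring

theorem sum_pentHalfWidth_bottom (p k : ℕ) :
    ∑ n ∈ Finset.range (k + 1), (2 * pentHalfWidth p k n + 1) =
      (k + 1) * (2 * k * ((p : ℤ) ^ 2 - p + 1) - k + 1) := by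
  have hterm : ∀ n ∈ Finset.range (k + 1), 2 * pentHalfWidth p k n + 1 =
      (2 * k * ((p : ℤ) ^ 2 - p + 1) + 1) + (-2) * n := fun n hn => by
    rw [pentHalfWidth_of_le (Nat.lt_succ_iff.1 (Finset.mem_range.1 hn))]
    ring
  have hsum := two_mul_sum_range_linear (2 * k * ((p : ℤ) ^ 2 - p + 1) + 1) (-2) (k + 1)
  rw [Finset.sum_congr rfl hterm]
  push_cast at hsum
  linarith

theorem sum_pentHalfWidth_top {p k : ℕ} (hp : 1 ≤ p) :
    ∑ j ∈ Finset.range (k * (p - 1) + k / p - k), (2 * pentHalfWidth p k (k + 1 + j) + 1) =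
      (((p : ℤ) ^ 2 - p + 1) * (p - 2) + 1) * k ^ 2 - ((p : ℤ) ^ 2 - p - 1) * k -
        (k / p : ℕ) := by
  obtain rfl | hp2 := hp.eq_or_lt
  · simp
  obtain ⟨m, r, hr, rfl⟩ : ∃ m r, r < p ∧ k = p * m + r :=
    ⟨k / p, k % p, Nat.mod_lt _ (by omega), (Nat.div_add_mod k p).symm⟩
  rw [Nat.mul_add_div (by omega), Nat.div_eq_of_lt hr, add_zero]
  set J := (p * m + r) * (p - 1) + m - (p * m + r)
  have hJ : (J : ℤ) = (p - 1) * (m * (p - 1) + r - 1) + (p - 1 - r) := by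
    have : p * m + r ≤ (p * m + r) * (p - 1) + m :=
      (Nat.le_mul_of_pos_right _ (by omega)).trans (Nat.le_add_right _ _)
    push_cast [J, Nat.cast_sub this, Nat.cast_sub hp]
    ring
  have hterm : ∀ j ∈ Finset.range J,
      2 * pentHalfWidth p (p * m + r) (p * m + r + 1 + j) + 1 =
        ((2 * p * (p * m + r) * (p - 1) - 2 * p - 3) + (-2 * (p + 1)) * j) -
          2 * ((j : ℤ) / (p - 1)) :=
    fun j _ => by rw [pentHalfWidth_add hp2]; push_cast; ring
  have hlin := two_mul_sum_range_linear (2 * p * (p * m + r) * (p - 1) - 2 * p - 3)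
    (-2 * (p + 1)) J
  have hfloor := two_mul_sum_range_ediv J hJ (by omega) (by omega)
  rw [Finset.sum_congr rfl hterm, Finset.sum_sub_distrib, ← Finset.mul_sum]
  rw [hJ] at hlin
  refine mul_left_cancel₀ two_ne_zero ?_
  push_cast
  linear_combination hlin - 2 * hfloor

theorem ehr_pent {p k : ℕ} (hp : 1 ≤ p) (hk : 0 < k) :
    (ehr (pent p) k : ℤ) =
      p * ((p : ℤ) ^ 2 - p + 1) * k ^ 2 + ((p : ℤ) ^ 2 - p + 3) * k + 1 - (k / p : ℕ) := by
  have hset : {x : Fin 2 → ℤ | (fun i => (x i : ℝ)) ∈ (k : ℝ) • pent p} =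
      {z : Fin 2 → ℤ | ∃ n ≤ k * (p - 1) + k / p, z 1 = n ∧ |z 0| ≤ pentHalfWidth p k n} := by
    ext z
    simp only [Set.mem_ofPred_eq, mem_smul_pent hp hk]
    constructor
    · rintro ⟨h0, h1, h2⟩
      obtain ⟨n, hn⟩ := Int.eq_ofNat_of_zero_le (a := z 1) (by exact_mod_cast h0)
      rw [hn] at h1 h2
      obtain ⟨hY, hw⟩ :=
        (abs_le_pentHalfWidth_iff hp).1 ⟨by exact_mod_cast h1, by exact_mod_cast h2⟩
      exact ⟨n, hY, hn, hw⟩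
    · rintro ⟨n, hY, hn, hw⟩
      obtain ⟨h1, h2⟩ := (abs_le_pentHalfWidth_iff hp).2 ⟨hY, hw⟩
      rw [hn]
      exact ⟨Nat.cast_nonneg n, by exact_mod_cast h1, by exact_mod_cast h2⟩
  have hw : ∀ n ≤ k * (p - 1) + k / p, 0 ≤ pentHalfWidth p k n := fun n hn => by
    have hpn := (le_mul_sub_one_add_div_iff hp).1 hn
    have hp1 : (1 : ℤ) ≤ p := by exact_mod_cast hp
    simpa using ((abs_le_pentHalfWidth_iff hp (x := 0)).1
      ⟨by rw [abs_zero]; nlinarith, by rw [abs_zero]; nlinarith⟩).2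
  have hkY : k ≤ k * (p - 1) + k / p := by
    rw [le_mul_sub_one_add_div_iff hp]
    nlinarith [sq_nonneg ((p : ℤ) - 1), (Nat.cast_nonneg k : (0 : ℤ) ≤ k)]
  rw [ehr, hset, ncard_symmetric_rows _ _ hw, show k * (p - 1) + k / p + 1 =
    (k + 1) + (k * (p - 1) + k / p - k) by omega, Finset.sum_range_add,
    sum_pentHalfWidth_bottom, sum_pentHalfWidth_top hp]
  ring

theorem seg_eq (p : ℕ) :
    seg p = (fun t : ℝ => fun _ : Fin 1 => t) '' Set.Icc (-(1 / p)) 0 := by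
  have h := LinearMap.image_convexHull
    (LinearMap.pi fun _ : Fin 1 => (LinearMap.id : ℝ →ₗ[ℝ] ℝ)) {-(1 / (p : ℝ)), 0}
  rw [convexHull_pair, segment_eq_Icc (by simp only [one_div, Left.neg_nonpos_iff, inv_nonneg,
    Nat.cast_nonneg]), Set.image_pair, map_zero] at h
  exact h.symm

theorem ehr_seg (p : ℕ) {k : ℕ} (hk : 0 < k) : ehr (seg p) k = k / p + 1 := by
  have hk0 : (0 : ℝ) < k := by exact_mod_cast hk
  have hsmul : (k : ℝ) • seg p = (fun t : ℝ => fun _ : Fin 1 => t) '' Set.Icc (-(k / p)) 0 := by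
    rw [seg_eq, ← Set.image_smul_comm (fun t : ℝ => fun _ : Fin 1 => t) _ _ fun _ => rfl,
      LinearOrderedField.smul_Icc hk0, mul_zero, mul_neg, mul_one_div]
  have hfloor : ⌊(k / p : ℝ)⌋ = ((k / p : ℕ) : ℤ) := by
    rw [Int.floor_div_natCast, Int.floor_natCast, Int.ofNat_ediv_ofNat]
  have hlow : ∀ z : ℤ, -(k / p : ℝ) ≤ z ↔ -((k / p : ℕ) : ℤ) ≤ z := fun z => by
    rw [← hfloor, neg_le (b := (z : ℝ)), neg_le (b := z), Int.le_floor, Int.cast_neg]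
  have hset : {x : Fin 1 → ℤ | (fun i => (x i : ℝ)) ∈ (k : ℝ) • seg p} =
      (fun z : ℤ => fun _ : Fin 1 => z) '' Set.Icc (-((k / p : ℕ) : ℤ)) 0 := by
    ext x
    rw [hsmul]
    constructor
    · rintro ⟨t, ⟨h1, h2⟩, ht⟩
      have htx : t = x 0 := congrFun ht 0
      rw [htx] at h1 h2
      exact ⟨x 0, ⟨(hlow _).1 h1, by exact_mod_cast h2⟩,
        funext fun i => by rw [Subsingleton.elim i 0]⟩
    · rintro ⟨z, ⟨h1, h2⟩, rfl⟩
      exact ⟨z, ⟨(hlow z).2 h1, by exact_mod_cast h2⟩, rfl⟩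
  rw [ehr, hset, Set.ncard_image_of_injective _ fun a b h => congrFun h 0, ← Finset.coe_Icc,
    Set.ncard_coe_finset, Int.card_Icc, zero_add, sub_neg_eq_add, add_comm]
  exact Int.toNat_natCast_add_one

/-- `ehr_P(t) ≡ -ehr_ℓ(t)` for the pentagon `P` and segment `ℓ = [-1/p,0]`:
their Ehrhart functions sum to a polynomial. -/
theorem pentagon_complements_segment (p : ℕ) (hp : 1 ≤ p) :
    ∃ f : Polynomial ℚ, ∀ k : ℕ, 0 < k →
      (ehr (pent p) k : ℚ) + (ehr (seg p) k : ℚ) = f.eval (k : ℚ) := by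
  refine ⟨Polynomial.C ((p : ℚ) * ((p : ℚ) ^ 2 - p + 1)) * Polynomial.X ^ 2 +
    Polynomial.C ((p : ℚ) ^ 2 - p + 3) * Polynomial.X + Polynomial.C 2, fun k hk => ?_⟩
  have hpent := congrArg (Int.cast : ℤ → ℚ) (ehr_pent hp hk)
  simp only [Int.cast_sub, Int.cast_add, Int.cast_mul, Int.cast_pow, Int.cast_natCast,
    Int.cast_one, Int.cast_ofNat] at hpent
  simp only [ehr_seg p hk, Polynomial.eval_add, Polynomial.eval_mul, Polynomial.eval_pow,
    Polynomial.eval_C, Polynomial.eval_X]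
  push_cast
  linear_combination hpent
end
end

section
/- If q(t) = Σ c_i(k)k^i and r(t) = Σ d_i(k)k^i are quasi-polynomials with q ≡ r (their difference is a polynomial), then for each i the minimum period of c_i equals the minimum period of d_i. -/
open Set Pointwise

noncomputable section

open Polynomial Finset Function

/-!
Pass to a common period `L` of all coefficients of the difference `e i := c i - d i`. Fixing a
residue `r`, the polynomial `∑ e i r * X ^ i` agrees with `f` at the infinitely many points
`r + m L`, hence equals `f`; so every `e i` is the constant `f.coeff i`, and a function and its
translate by a constant have the same periods.
-/

theorem IsPeriodOf.periodic {c : ℤ → ℚ} {p : ℕ} (h : IsPeriodOf c p) : Periodic c p := h.2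

theorem IsPeriodOf.of_dvd {c : ℤ → ℚ} {p L : ℕ} (h : IsPeriodOf c p) (hL : 0 < L) (hpL : p ∣ L) :
    IsPeriodOf c L := by
  obtain ⟨m, rfl⟩ := hpL
  refine ⟨hL, ?_⟩
  rw [Nat.cast_mul, mul_comm]
  exact h.periodic.nat_mul m

theorem IsPeriodOf.sub {c d : ℤ → ℚ} {p q : ℕ} (hc : IsPeriodOf c p) (hd : IsPeriodOf d q) :
    IsPeriodOf (c - d) (p * q) := by
  have hpq : 0 < p * q := Nat.mul_pos hc.1 hd.1
  refine ⟨hpq, fun k => ?_⟩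
  simp only [Pi.sub_apply, (hc.of_dvd hpq (dvd_mul_right p q)).2 k,
    (hd.of_dvd hpq (dvd_mul_left q p)).2 k]

theorem exists_isPeriodOf_forall_mem {ι : Type*} (s : Finset ι) (e : ι → ℤ → ℚ)
    (he : ∀ i ∈ s, ∃ p, IsPeriodOf (e i) p) : ∃ L, ∀ i ∈ s, IsPeriodOf (e i) L := by
  choose p hp using he
  refine ⟨∏ i ∈ s.attach, p i i.2, fun i hi => (hp i hi).of_dvd ?_ ?_⟩
  · exact prod_pos fun j _ => (hp j j.2).1
  · exact dvd_prod_of_mem (fun j : s => p j j.2) (mem_attach s ⟨i, hi⟩)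

theorem eq_coeff_of_periodic_of_sum_eq_eval {R : Type*} [CommRing R] [IsDomain R] [CharZero R]
    (N : ℕ) (e : ℕ → ℤ → R) (L : ℤ) (hL : L ≠ 0) (he : ∀ i ∈ range (N + 1), Periodic (e i) L)
    (f : R[X]) (hf : ∀ k : ℤ, ∑ i ∈ range (N + 1), e i k * (k : R) ^ i = f.eval (k : R)) :
    ∀ i ≤ N, ∀ k, e i k = f.coeff i := by
  intro i hi r
  set g : R[X] := ∑ j ∈ range (N + 1), C (e j r) * X ^ j
  have hg_eval : ∀ m : ℕ, g.eval ((r + m * L : ℤ) : R) = f.eval ((r + m * L : ℤ) : R) := by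
    intro m
    rw [← hf, eval_finsetSum]
    refine sum_congr rfl fun j hj => ?_
    rw [eval_mul, eval_C, eval_pow, eval_X, ((he j hj).nat_mul m) r]
  have hinj : Injective fun m : ℕ => ((r + m * L : ℤ) : R) :=
    Int.cast_injective.comp fun a b hab =>
      Nat.cast_injective (mul_right_cancel₀ hL (add_left_cancel hab))
  have hgf : g = f :=
    eq_of_infinite_eval_eq g f <| (Set.infinite_range_of_injective hinj).mono <| by
      rintro _ ⟨m, rfl⟩
      exact hg_eval m
  rw [← hgf, finsetSum_coeff, sum_eq_single i]
  · rw [coeff_C_mul_X_pow, if_pos rfl]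
  · intro j _ hji
    rw [coeff_C_mul_X_pow, if_neg hji.symm]
  · intro h
    exact absurd (mem_range.2 (Nat.lt_succ_of_le hi)) h

theorem isPeriodOf_iff_of_sub_eq_const {c d : ℤ → ℚ} {a : ℚ} (h : ∀ k, c k - d k = a) (p : ℕ) :
    IsPeriodOf c p ↔ IsPeriodOf d p := by
  have hd : ∀ k, d k = c k - a := fun k => by rw [← h k]; ring
  simp only [IsPeriodOf, hd, sub_left_inj]

theorem isMinPeriod_iff_of_sub_eq_const {c d : ℤ → ℚ} {a : ℚ} (h : ∀ k, c k - d k = a) (p : ℕ) :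
    IsMinPeriod c p ↔ IsMinPeriod d p := by
  simp only [IsMinPeriod, isPeriodOf_iff_of_sub_eq_const h]

/-- if two quasi-polynomials are equivalent modulo polynomials, then
their coefficient functions have the same minimum periods. -/
theorem equiv_quasiPolys_same_min_periods (N : ℕ) (c d : ℕ → ℤ → ℚ)
    (hc : ∀ i, ∃ p, IsPeriodOf (c i) p) (hd : ∀ i, ∃ p, IsPeriodOf (d i) p)
    (hequiv : ∃ f : Polynomial ℚ, ∀ k : ℤ,
      (∑ i ∈ Finset.range (N + 1), c i k * (k : ℚ) ^ i) -
        (∑ i ∈ Finset.range (N + 1), d i k * (k : ℚ) ^ i) = f.eval (k : ℚ)) :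
    ∀ i, i ≤ N → ∀ m : ℕ, (IsMinPeriod (c i) m ↔ IsMinPeriod (d i) m) := by
  obtain ⟨f, hf⟩ := hequiv
  obtain ⟨L, hL⟩ := exists_isPeriodOf_forall_mem (range (N + 1)) (fun i => c i - d i)
    fun i _ => ⟨_, (hc i).choose_spec.sub (hd i).choose_spec⟩
  have hL0 : (L : ℤ) ≠ 0 := by
    obtain ⟨hpos, -⟩ := hL 0 (mem_range.2 N.succ_pos)
    exact_mod_cast hpos.ne'
  have hconst := eq_coeff_of_periodic_of_sum_eq_eval N (fun i => c i - d i) L hL0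
    (fun i hi => (hL i hi).periodic) f
    fun k => by simpa only [Pi.sub_apply, sub_mul, sum_sub_distrib] using hf k
  intro i hi m
  exact isMinPeriod_iff_of_sub_eq_const (hconst i hi) m
end
end
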